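/- In the ring ℤ[x]/⟨binom(n,1)x, binom(n,2)x², ..., binom(n,n)xⁿ⟩, the annihilator of the class of x^r (for 1 ≤ r ≤ n) is the ideal generated by b_{n,r} = gcd{binom(n,1), ..., binom(n,r)} in ℤ. -/

import Mathlib

/-!
An ideal of `R[X]` generated by monomials `a_k X^k` is graded: the coefficient of `X^j` of any of
its elements lies in the ideal of `R` generated by the `a_k` with `k ≤ j`, and conversely `m X^r`
belongs to it as soon as `m` lies in that ideal for `j = r`, since `a_k X^r = X^(r-k) · a_k X^k`.
For `R = ℤ`, Bézout identifies the ideal `(C(n,1), …, C(n,r))` with `(b_{n,r})`.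
-/

open Polynomial

lemma Ideal.span_image_eq_span_singleton_finset_gcd {α R : Type*} [CommRing R] [IsBezout R]
    [NormalizedGCDMonoid R] (s : Finset α) (f : α → R) :
    Ideal.span (f '' s) = Ideal.span {s.gcd f} := by
  refine le_antisymm (Ideal.span_le.mpr ?_) ((Ideal.span_singleton_le_iff_mem _).mpr ?_)
  · rintro _ ⟨a, ha, rfl⟩
    exact Ideal.mem_span_singleton.mpr (Finset.gcd_dvd ha)
  · obtain ⟨g, hg⟩ := s.gcd_eq_sum_mul f
    rw [hg]
    exact Ideal.sum_mem _ fun a ha => Ideal.mul_mem_right _ _ (Ideal.subset_span ⟨a, ha, rfl⟩)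

lemma Int.natCast_finset_gcd {α : Type*} (s : Finset α) (f : α → ℕ) :
    ((s.gcd f : ℕ) : ℤ) = s.gcd fun a => (f a : ℤ) := by
  classical
  induction s using Finset.induction with
  | empty => simp
  | insert a s _ ih =>
    rw [Finset.gcd_insert, Finset.gcd_insert, ← ih, ← Int.coe_gcd, Int.gcd_natCast_natCast]
    rfl

section MonomialIdeal

variable {R : Type*} [CommSemiring R] (s : Set ℕ) (a : ℕ → R)

lemma Polynomial.coeff_mem_span_of_mem_span_C_mul_X_pow {p : R[X]}
    (hp : p ∈ Ideal.span {q | ∃ k ∈ s, q = C (a k) * X ^ k}) (j : ℕ) :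
    p.coeff j ∈ Ideal.span (a '' {k ∈ s | k ≤ j}) := by
  induction hp using Submodule.span_induction generalizing j with
  | mem q hq =>
    obtain ⟨k, hk, rfl⟩ := hq
    rw [coeff_C_mul_X_pow]
    split_ifs with hjk
    · exact Ideal.subset_span ⟨k, ⟨hk, hjk.ge⟩, rfl⟩
    · exact zero_mem _
  | zero => simp
  | add p q _ _ hp hq => simpa only [coeff_add] using add_mem (hp j) (hq j)
  | smul c p _ hp =>
    rw [smul_eq_mul, coeff_mul]
    refine Ideal.sum_mem _ fun il hil => Ideal.mul_mem_left _ _ ?_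
    have hl : il.2 ≤ j := Finset.HasAntidiagonal.antidiagonal.snd_le hil
    refine Ideal.span_mono (Set.image_mono ?_) (hp il.2)
    exact fun k hk => ⟨hk.1, hk.2.trans hl⟩

lemma Polynomial.C_mul_X_pow_mem_span_C_mul_X_pow_iff (m : R) (r : ℕ) :
    C m * X ^ r ∈ Ideal.span {q | ∃ k ∈ s, q = C (a k) * X ^ k} ↔
      m ∈ Ideal.span (a '' {k ∈ s | k ≤ r}) := by
  set I := Ideal.span {q | ∃ k ∈ s, q = C (a k) * X ^ k}
  constructor
  · intro hm
    simpa using coeff_mem_span_of_mem_span_C_mul_X_pow s a hm r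
  · suffices Ideal.span (a '' {k ∈ s | k ≤ r}) ≤ (I.colon {X ^ r}).comap C from
      fun hm => by simpa using this hm
    refine Ideal.span_le.mpr ?_
    rintro _ ⟨k, ⟨hk, hkr⟩, rfl⟩
    have hfactor : C (a k) * X ^ r = X ^ (r - k) * (C (a k) * X ^ k) := by
      rw [mul_left_comm, ← pow_add, Nat.sub_add_cancel hkr]
    simpa [hfactor] using I.mul_mem_left (X ^ (r - k)) (Ideal.subset_span ⟨k, hk, rfl⟩)

end MonomialIdeal

open Polynomial in
theorem stmt_12_general (n r : ℕ) (hrn : r ≤ n) (m : ℤ) :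
    m • ((Ideal.Quotient.mk (Ideal.span
        {q : Polynomial ℤ | ∃ k, 1 ≤ k ∧ k ≤ n ∧ q = C (n.choose k : ℤ) * X ^ k}))
      ((X : Polynomial ℤ) ^ r)) = 0 ↔
      (((Finset.Icc 1 r).gcd n.choose : ℕ) : ℤ) ∣ m := by
  have hgens : {q : ℤ[X] | ∃ k, 1 ≤ k ∧ k ≤ n ∧ q = C (n.choose k : ℤ) * X ^ k} =
      {q | ∃ k ∈ Set.Icc 1 n, q = C (n.choose k : ℤ) * X ^ k} := by
    simp only [Set.mem_Icc, and_assoc]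
  have hindices : {k ∈ Set.Icc 1 n | k ≤ r} = (Finset.Icc 1 r : Set ℕ) := by
    ext k
    simp only [Set.mem_ofPred_eq, Set.mem_Icc, Finset.coe_Icc]
    omega
  rw [← map_zsmul, Ideal.Quotient.eq_zero_iff_mem, smul_eq_C_mul, hgens,
    C_mul_X_pow_mem_span_C_mul_X_pow_iff, hindices, Ideal.span_image_eq_span_singleton_finset_gcd,
    Ideal.mem_span_singleton, Int.natCast_finset_gcd]

open Polynomial in
/-- In `ℤ[x]/⟨C(n,1)x, ..., C(n,n)xⁿ⟩`, an integer `m` annihilates the class of `x^r`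
iff `b_{n,r} = gcd{C(n,1),...,C(n,r)}` divides `m`. -/
theorem stmt_12 (n r : ℕ) (hn : 2 ≤ n) (hr1 : 1 ≤ r) (hrn : r ≤ n) (m : ℤ) :
    m • ((Ideal.Quotient.mk (Ideal.span
        {q : Polynomial ℤ | ∃ k, 1 ≤ k ∧ k ≤ n ∧ q = C (n.choose k : ℤ) * X ^ k}))
      ((X : Polynomial ℤ) ^ r)) = 0 ↔
      (((Finset.Icc 1 r).gcd n.choose : ℕ) : ℤ) ∣ m :=
  stmt_12_general n r hrn m
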